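/- arXiv:1309.2367 — 6 statements merged into one kernel-verified Lean document; each statement's English description precedes it below -/
import Mathlib

section
/- If R is an integral domain, M a torsion-free R-module, and R' a flat R-algebra which is an integral domain, then R' ⊗_R M is a torsion-free R'-module. -/
/-!
A torsion-free module `M` over a domain `R` embeds into its localization `K ⊗_R M`, which is a
vector space over the fraction field `K` and hence flat over `R`. Flatness of `R'` preserves the
embedding after base change, and `R' ⊗_R (K ⊗_R M)` is flat over `R'`, so torsion-free.
-/

open TensorProduct Module

universe u v w

open scoped nonZeroDivisors in
theorem LocalizedModule.mkLinearMap_nonZeroDivisors_injective {R M : Type*} [CommRing R]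
    [AddCommGroup M] [Module R M] [IsTorsionFree R M] :
    Function.Injective (LocalizedModule.mkLinearMap R⁰ M) :=
  (IsLocalizedModule.injective_iff_isRegular R⁰ _).2 fun c ↦
    (isRegular_iff_mem_nonZeroDivisors.2 c.2).isSMulRegular

theorem Module.IsTorsionFree.baseChange_of_injective_flat {R M N : Type*} (R' : Type*)
    [CommRing R] [CommRing R'] [Algebra R R'] [Flat R R']
    [AddCommGroup M] [Module R M] [AddCommGroup N] [Module R N] [Flat R N]
    (f : M →ₗ[R] N) (hf : Function.Injective f) : IsTorsionFree R' (R' ⊗[R] M) :=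
  (Flat.lTensor_preserves_injective_linearMap (M := R') f hf).moduleIsTorsionFree
    (f.baseChange R') fun r x ↦ map_smul (f.baseChange R') r x

open scoped nonZeroDivisors in
theorem Module.IsTorsionFree.baseChange {R M : Type*} (R' : Type*)
    [CommRing R] [IsDomain R] [CommRing R'] [Algebra R R'] [Flat R R']
    [AddCommGroup M] [Module R M] [IsTorsionFree R M] : IsTorsionFree R' (R' ⊗[R] M) :=
  have : Flat R (LocalizedModule R⁰ M) := Flat.trans R (FractionRing R) _
  .baseChange_of_injective_flat R' _ LocalizedModule.mkLinearMap_nonZeroDivisors_injective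

theorem stmt1 (R : Type u) (M : Type v) (R' : Type w)
    [CommRing R] [IsDomain R] [AddCommGroup M] [Module R M]
    [CommRing R'] [IsDomain R'] [Algebra R R'] [Module.Flat R R']
    (htf : ∀ (a : R) (m : M), a • m = 0 → a = 0 ∨ m = 0) :
    ∀ (a : R') (x : R' ⊗[R] M), a • x = 0 → a = 0 ∨ x = 0 := by
  have := IsTorsionFree.of_smul_eq_zero htf
  exact isTorsionFree_iff_smul_eq_zero.1 (IsTorsionFree.baseChange R')
end

section
/- Let R be an integral domain, M an R-module, and A_1, …, A_r be R-algebras which are integral domains such that R → ∏_i A_i is faithfully flat. If each A_i ⊗_R M is torsion-free as an A_i-module, then M is torsion-free as an R-module. -/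
/-!
Let `a ≠ 0` kill `m`. Each `A i` is a retract of the flat module `∏ A i`, hence flat and so
`R`-torsion-free; thus either `1 = 0` in `A i` or the image of `a` in `A i` is nonzero, and in
both cases torsion-freeness of `A i ⊗ M` forces `1 ⊗ m = 0`. Since `(∏ A i) ⊗ M = ∏ (A i ⊗ M)`,
also `1 ⊗ m = 0` in `(∏ A i) ⊗ M`, and faithful flatness gives `m = 0`.
-/

open TensorProduct

universe u v w

theorem Module.Flat.of_pi {R ι : Type*} [CommSemiring R] [DecidableEq ι] {M : ι → Type*}
    [∀ i, AddCommMonoid (M i)] [∀ i, Module R (M i)] [Module.Flat R (∀ i, M i)] (i : ι) :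
    Module.Flat R (M i) :=
  .of_retract (LinearMap.single R M i) (LinearMap.proj i) (LinearMap.proj_comp_single_same ..)

theorem TensorProduct.pi_tmul_eq_zero_iff {R ι : Type*} [CommSemiring R] [Finite ι]
    {M : ι → Type*} [∀ i, AddCommMonoid (M i)] [∀ i, Module R (M i)]
    {N : Type*} [AddCommMonoid N] [Module R N] (x : ∀ i, M i) (n : N) :
    x ⊗ₜ[R] n = 0 ↔ ∀ i, x i ⊗ₜ[R] n = 0 := by
  have := Fintype.ofFinite ι
  classical
  rw [← (piLeft R N M).map_eq_zero_iff, funext_iff]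
  simp

theorem TensorProduct.one_tmul_eq_zero_of_smul_eq_zero {R A M : Type*} [CommRing R] [IsDomain R]
    [Ring A] [Algebra R A] [Module.Flat R A] [AddCommGroup M] [Module R M]
    (htf : ∀ (b : A) (x : A ⊗[R] M), b • x = 0 → b = 0 ∨ x = 0)
    {a : R} (ha : a ≠ 0) {m : M} (ham : a • m = 0) : (1 : A) ⊗ₜ[R] m = 0 := by
  have hkill : algebraMap R A a • ((1 : A) ⊗ₜ[R] m) = 0 := by
    rw [algebraMap_smul, ← tmul_smul, ham, tmul_zero]
  refine (htf _ _ hkill).elim (fun h ↦ ?_) id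
  have hone : (1 : A) = 0 :=
    (Module.Flat.isSMulRegular_of_isRegular (IsRegular.of_ne_zero ha)).right_eq_zero_of_smul
      (by rwa [← Algebra.algebraMap_eq_smul_one])
  rw [hone, zero_tmul]

theorem stmt2_general (R : Type u) (M : Type v) [CommRing R] [IsDomain R]
    [AddCommGroup M] [Module R M]
    (r : ℕ) (A : Fin r → Type w) [∀ i, CommRing (A i)]
    [∀ i, Algebra R (A i)]
    (hff : Module.FaithfullyFlat R (∀ i, A i))
    (htf : ∀ i, ∀ (a : A i) (x : A i ⊗[R] M), a • x = 0 → a = 0 ∨ x = 0) :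
    ∀ (a : R) (m : M), a • m = 0 → a = 0 ∨ m = 0 := by
  intro a m ham
  refine or_iff_not_imp_left.mpr fun ha ↦ ?_
  have := hff
  refine (Module.FaithfullyFlat.one_tmul_eq_zero_iff R M (A := ∀ i, A i) m).mp ?_
  refine (pi_tmul_eq_zero_iff _ m).mpr fun i ↦ ?_
  have : Module.Flat R (A i) := .of_pi i
  exact one_tmul_eq_zero_of_smul_eq_zero (htf i) ha ham

theorem stmt2 (R : Type u) (M : Type v) [CommRing R] [IsDomain R]
    [AddCommGroup M] [Module R M]
    (r : ℕ) (A : Fin r → Type w) [∀ i, CommRing (A i)] [∀ i, IsDomain (A i)]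
    [∀ i, Algebra R (A i)]
    (hff : Module.FaithfullyFlat R (∀ i, A i))
    (htf : ∀ i, ∀ (a : A i) (x : A i ⊗[R] M), a • x = 0 → a = 0 ∨ x = 0) :
    ∀ (a : R) (m : M), a • m = 0 → a = 0 ∨ m = 0 :=
  stmt2_general R M r A hff htf
end

section
/- Let R be an integral domain and M, N be R-modules such that the torsion-free quotients M_tf = M/M_tor and N_tf = N/N_tor are lattices. Then (M ⊗_R N)_tf is a lattice. -/
/-!
Choose embeddings `M_tf ↪ P` and `N_tf ↪ Q` with `P`, `Q` finitely generated. The composite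
`M ⊗ N → M_tf ⊗ N_tf → P ⊗ Q` has torsion kernel: the kernel of the first map is spanned by pure
tensors with a torsion factor, and the second map becomes injective after base change to the
fraction field `K`, over which all modules are flat, while torsion is exactly what `K ⊗ -` kills.
Such a map induces an embedding of `(M ⊗ N)_tf` into the finitely generated module `(P ⊗ Q)_tf`.
-/

open TensorProduct

universe u v

/-- An `R`-module `M` over a domain is a *lattice* if it is torsion-free and embeds into
a finitely generated `R`-module. -/
def IsLattice (R : Type u) (M : Type v) [CommRing R] [AddCommGroup M] [Module R M] : Prop :=
  (∀ (a : R) (m : M), a • m = 0 → a = 0 ∨ m = 0) ∧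
  ∃ (P : Type v) (_ : AddCommGroup P) (_ : Module R P) (_ : Module.Finite R P)
    (f : M →ₗ[R] P), Function.Injective f

open Submodule LinearMap
open scoped nonZeroDivisors

section

variable {R : Type*} [CommRing R] {M N P Q : Type*} [AddCommGroup M] [Module R M]
  [AddCommGroup N] [Module R N] [AddCommGroup P] [Module R P] [AddCommGroup Q] [Module R Q]

theorem Submodule.torsion_le_comap_torsion (φ : M →ₗ[R] N) :
    torsion R M ≤ (torsion R N).comap φ := by
  rintro x ⟨s, hs⟩
  exact ⟨s, by rw [Submonoid.smul_def, ← map_smul, ← Submonoid.smul_def, hs, map_zero]⟩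

theorem Submodule.comap_torsion_eq_of_ker_le {φ : M →ₗ[R] N} (h : ker φ ≤ torsion R M) :
    (torsion R N).comap φ = torsion R M := by
  refine le_antisymm (fun x ⟨s, hs⟩ ↦ ?_) (torsion_le_comap_torsion φ)
  have hsx : (s : R) • x ∈ ker φ := by rwa [mem_ker, map_smul]
  obtain ⟨t, ht⟩ := h hsx
  exact ⟨t * s, by rw [Submonoid.smul_def, Submonoid.coe_mul, mul_smul]; exact ht⟩

theorem Submodule.mapQ_torsion_injective {φ : M →ₗ[R] N} (h : ker φ ≤ torsion R M) :
    Function.Injective (mapQ (torsion R M) (torsion R N) φ (torsion_le_comap_torsion φ)) := by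
  rw [← ker_eq_bot, ker_mapQ, comap_torsion_eq_of_ker_le h, mkQ_map_self]

theorem TensorProduct.tmul_mem_torsion_right (m : M) {n : N} (hn : n ∈ torsion R N) :
    m ⊗ₜ[R] n ∈ torsion R (M ⊗[R] N) := by
  obtain ⟨s, hs⟩ := hn
  exact ⟨s, by rw [Submonoid.smul_def, ← tmul_smul, ← Submonoid.smul_def, hs, tmul_zero]⟩

theorem TensorProduct.tmul_mem_torsion_left {m : M} (hm : m ∈ torsion R M) (n : N) :
    m ⊗ₜ[R] n ∈ torsion R (M ⊗[R] N) := by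
  obtain ⟨s, hs⟩ := hm
  exact ⟨s, by rw [Submonoid.smul_def, smul_tmul', ← Submonoid.smul_def, hs, zero_tmul]⟩

theorem TensorProduct.ker_map_mkQ_torsion_le :
    ker (map (torsion R M).mkQ (torsion R N).mkQ) ≤ torsion R (M ⊗[R] N) := by
  rw [map_ker (exact_subtype_mkQ _) (mkQ_surjective _) (exact_subtype_mkQ _) (mkQ_surjective _),
    range_eq_map, range_eq_map, ← span_tmul_eq_top, ← span_tmul_eq_top, Submodule.map_span,
    Submodule.map_span, sup_le_iff, span_le, span_le]
  constructor
  · rintro _ ⟨_, ⟨m, n, rfl⟩, rfl⟩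
    exact tmul_mem_torsion_right m n.2
  · rintro _ ⟨_, ⟨m, n, rfl⟩, rfl⟩
    exact tmul_mem_torsion_left m.2 n

theorem Submodule.mem_torsion_iff_one_tmul_eq_zero (K : Type*) [CommRing K] [Algebra R K]
    [IsFractionRing R K] (x : M) : x ∈ torsion R M ↔ (1 : K) ⊗ₜ[R] x = 0 := by
  have : IsLocalizedModule R⁰ (TensorProduct.mk R K M 1) :=
    (isLocalizedModule_iff_isBaseChange R⁰ K _).mpr (TensorProduct.isBaseChange R M K)
  exact (mem_torsion_iff x).trans
    (IsLocalizedModule.eq_zero_iff R⁰ (TensorProduct.mk R K M 1)).symm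

theorem TensorProduct.baseChange_map_eq (A : Type*) [CommRing A] [Algebra R A]
    (f : M →ₗ[R] P) (g : N →ₗ[R] Q) :
    (map f g).baseChange A = (AlgebraTensorModule.distribBaseChange R A P Q).symm.toLinearMap ∘ₗ
      map (f.baseChange A) (g.baseChange A) ∘ₗ
      (AlgebraTensorModule.distribBaseChange R A M N).toLinearMap := by
  ext m n
  simp

theorem TensorProduct.ker_map_le_torsion [IsDomain R] {f : M →ₗ[R] P} {g : N →ₗ[R] Q}
    (hf : Function.Injective f) (hg : Function.Injective g) :
    ker (map f g) ≤ torsion R (M ⊗[R] N) := by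
  let K := FractionRing R
  have : Module.Flat K (K ⊗[R] P) := Module.Flat.of_free
  have : Module.Flat K (K ⊗[R] N) := Module.Flat.of_free
  have hfg : Function.Injective (map (f.baseChange K) (g.baseChange K)) :=
    map_injective_of_flat_flat _ _ (Module.Flat.lTensor_preserves_injective_linearMap f hf)
      (Module.Flat.lTensor_preserves_injective_linearMap g hg)
  intro x hx
  have square := LinearMap.congr_fun (baseChange_map_eq K f g) ((1 : K) ⊗ₜ[R] x)
  rw [baseChange_tmul, mem_ker.mp hx, tmul_zero] at square
  rw [mem_torsion_iff_one_tmul_eq_zero K,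
    ← (AlgebraTensorModule.distribBaseChange R K M N).map_eq_zero_iff]
  refine hfg ?_
  simpa using square.symm

end

theorem stmt4 (R : Type u) (M N : Type u) [CommRing R] [IsDomain R]
    [AddCommGroup M] [Module R M] [AddCommGroup N] [Module R N]
    (hM : IsLattice R (M ⧸ Submodule.torsion R M))
    (hN : IsLattice R (N ⧸ Submodule.torsion R N)) :
    IsLattice R ((M ⊗[R] N) ⧸ Submodule.torsion R (M ⊗[R] N)) := by
  obtain ⟨-, P, _, _, _, f, hf⟩ := hM
  obtain ⟨-, Q, _, _, _, g, hg⟩ := hN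
  refine ⟨fun a m h ↦ smul_eq_zero.mp h, (P ⊗[R] Q) ⧸ torsion R (P ⊗[R] Q), inferInstance,
    inferInstance, inferInstance, _,
    mapQ_torsion_injective (φ := map (f ∘ₗ mkQ _) (g ∘ₗ mkQ _)) ?_⟩
  rw [TensorProduct.map_comp, ker_comp, ← comap_torsion_eq_of_ker_le ker_map_mkQ_torsion_le]
  exact comap_mono (ker_map_le_torsion hf hg)
end

section
/- Let R be an integral domain and R' a faithfully flat R-algebra which is a finite direct product of Krull domains. Then for every height-one prime ideal p of R, there exists a height-one prime ideal P of R' such that P ∩ R = p. -/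
/-!
Lift `p` to a prime `Q` of `R'` (faithful flatness); `Q` lives in a single factor `D i`, where it
is a nonzero prime because `R'` is torsion-free over `R`. In a Krull domain every nonzero prime `Q`
and nonzero `a ∈ Q` squeeze a height-one prime `a ∈ P ≤ Q`: otherwise pick `s ∉ Q` in each of the
finitely many height-one primes containing `a`; the DVR localizations give `a ∣ s ^ N` at every
height-one prime, hence in the ring, so `s ∈ Q`. The pullback of such a `P` to `R'` is height one,
and its contraction to `R` is a nonzero prime inside `p`, hence equals `p`.
-/

universe u

def IsHeightOnePrime {R : Type u} [CommRing R] (P : Ideal R) : Prop :=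
  P.IsPrime ∧ (∃ Q : Ideal R, Q.IsPrime ∧ Q < P) ∧
    ∀ Q₁ Q₂ : Ideal R, Q₁.IsPrime → Q₂.IsPrime → Q₁ < Q₂ → ¬ Q₂ < P

def IsKrullDomain (R : Type u) [CommRing R] [IsDomain R] : Prop :=
  (∀ (P : Ideal R) [P.IsPrime], IsHeightOnePrime P →
    IsDiscreteValuationRing (Localization.AtPrime P)) ∧
  (∀ x : FractionRing R,
    (∀ P : Ideal R, IsHeightOnePrime P →
      ∃ a s : R, s ∉ P ∧ x * algebraMap R (FractionRing R) s = algebraMap R (FractionRing R) a) →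
    ∃ r : R, algebraMap R (FractionRing R) r = x) ∧
  (∀ r : R, r ≠ 0 → {P : Ideal R | IsHeightOnePrime P ∧ r ∈ P}.Finite)

def IsFiniteProductOfKrullDomains (B : Type u) [CommRing B] : Prop :=
  ∃ (n : ℕ) (D : Fin n → Type u) (instR : ∀ i, CommRing (D i)) (instD : ∀ i, IsDomain (D i)),
    (∀ i, @IsKrullDomain (D i) (instR i) (instD i)) ∧ Nonempty (B ≃+* ∀ i, D i)

section HeightOne

variable {A : Type u} [CommRing A]

lemma IsHeightOnePrime.ne_bot {p : Ideal A} (hp : IsHeightOnePrime p) : p ≠ ⊥ := by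
  obtain ⟨Q, -, hQp⟩ := hp.2.1
  exact (bot_le.trans_lt hQp).ne'

lemma IsHeightOnePrime.eq_of_le [IsDomain A] {p I : Ideal A} (hp : IsHeightOnePrime p)
    (hI : I.IsPrime) (hI0 : I ≠ ⊥) (hIp : I ≤ p) : I = p := by
  by_contra hne
  exact hp.2.2 ⊥ I Ideal.isPrime_bot hI (bot_lt_iff_ne_bot.2 hI0) (hIp.lt_of_ne hne)

lemma IsHeightOnePrime.comap_of_surjective {B : Type u} [CommRing B] {f : A →+* B}
    (hf : Function.Surjective f) {P : Ideal B} (hP : IsHeightOnePrime P)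
    (hker : ∀ Q : Ideal A, Q.IsPrime → Q ≤ P.comap f → RingHom.ker f ≤ Q) :
    IsHeightOnePrime (P.comap f) := by
  refine ⟨hP.1.comap f, ?_, fun Q₁ Q₂ hQ₁ hQ₂ h12 h2P => ?_⟩
  · obtain ⟨Q, hQ, hQP⟩ := hP.2.1
    exact ⟨Q.comap f, hQ.comap f, (Ideal.orderEmbeddingOfSurjective f hf).strictMono hQP⟩
  · -- ideals containing `ker f` correspond to ideals of `B`
    let φ := (Ideal.relIsoOfSurjective f hf).symm
    have hker₂ := hker Q₂ hQ₂ h2P.le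
    have hker₁ := hker Q₁ hQ₁ (h12.trans h2P).le
    refine hP.2.2 (φ ⟨Q₁, hker₁⟩) (φ ⟨Q₂, hker₂⟩) (Ideal.map_isPrime_of_surjective hf hker₁)
      (Ideal.map_isPrime_of_surjective hf hker₂) (φ.lt_iff_lt.2 h12) ?_
    have h2P' : (⟨Q₂, hker₂⟩ : {I : Ideal A // Ideal.comap f ⊥ ≤ I}) <
        ⟨P.comap f, Ideal.comap_mono bot_le⟩ := h2P
    exact (φ.lt_iff_lt.2 h2P').trans_eq (Ideal.map_comap_of_surjective f hf P)

end HeightOne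

lemma IsLocalization.exists_mem_dvd_mul_of_algebraMap_dvd {R S : Type*} [CommRing R]
    [CommRing S] [Algebra R S] {M : Submonoid R} [IsLocalization M S] {a b : R}
    (h : algebraMap R S a ∣ algebraMap R S b) : ∃ t ∈ M, a ∣ b * t := by
  obtain ⟨z, hz⟩ := h
  obtain ⟨⟨x, s⟩, rfl⟩ := IsLocalization.mk'_surjective M z
  have hbs : algebraMap R S (b * s) = algebraMap R S (a * x) := by
    rw [map_mul, hz, mul_assoc, IsLocalization.mk'_spec, map_mul]
  obtain ⟨c, hc⟩ := IsLocalization.exists_of_eq (M := M) hbs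
  exact ⟨s * c, M.mul_mem s.2 c.2, ⟨x * c, by linear_combination hc⟩⟩

lemma IsDiscreteValuationRing.exists_dvd_pow_of_mem_maximalIdeal {R : Type*} [CommRing R]
    [IsDomain R] [IsDiscreteValuationRing R] {a s : R} (ha : a ≠ 0)
    (hs : s ∈ IsLocalRing.maximalIdeal R) : ∃ m : ℕ, a ∣ s ^ m := by
  obtain ⟨ϖ, hϖ⟩ := IsDiscreteValuationRing.exists_irreducible R
  obtain ⟨m, hm⟩ := IsDiscreteValuationRing.associated_pow_irreducible ha hϖ
  rw [hϖ.maximalIdeal_eq, Ideal.mem_span_singleton] at hs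
  exact ⟨m, hm.dvd.trans (pow_dvd_pow_of_dvd hs m)⟩

section Krull

variable {D : Type u} [CommRing D] [IsDomain D]

lemma exists_dvd_pow_mul_of_mem {P : Ideal D} [P.IsPrime]
    (hP : IsDiscreteValuationRing (Localization.AtPrime P)) {a s : D} (ha : a ≠ 0) (hs : s ∈ P) :
    ∃ m : ℕ, ∃ t ∉ P, a ∣ s ^ m * t := by
  have hinj : Function.Injective (algebraMap D (Localization.AtPrime P)) :=
    IsLocalization.injective _ P.primeCompl_le_nonZeroDivisors
  obtain ⟨m, hm⟩ := IsDiscreteValuationRing.exists_dvd_pow_of_mem_maximalIdeal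
    ((map_ne_zero_iff _ hinj).2 ha)
    ((IsLocalization.AtPrime.to_map_mem_maximal_iff (Localization.AtPrime P) P s).2 hs)
  obtain ⟨t, ht, hdvd⟩ := IsLocalization.exists_mem_dvd_mul_of_algebraMap_dvd
    (S := Localization.AtPrime P) (M := P.primeCompl) (a := a) (b := s ^ m)
    (by rwa [map_pow])
  exact ⟨m, t, ht, hdvd⟩

lemma IsKrullDomain.dvd_of_forall_dvd_mul (hD : IsKrullDomain D) {a b : D} (ha : a ≠ 0)
    (h : ∀ P : Ideal D, IsHeightOnePrime P → ∃ t ∉ P, a ∣ b * t) : a ∣ b := by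
  set ι := algebraMap D (FractionRing D)
  have hιa : ι a ≠ 0 := (map_ne_zero_iff _ (IsFractionRing.injective D _)).2 ha
  obtain ⟨r, hr⟩ := hD.2.1 (ι b / ι a) fun P hP => by
    obtain ⟨t, ht, c, hc⟩ := h P hP
    refine ⟨c, t, ht, ?_⟩
    rw [div_mul_eq_mul_div, div_eq_iff hιa, ← map_mul, hc, map_mul, mul_comm]
  refine ⟨r, IsFractionRing.injective D (FractionRing D) ?_⟩
  rw [map_mul, hr, mul_div_cancel₀ _ hιa]

lemma IsKrullDomain.exists_isHeightOnePrime_le (hD : IsKrullDomain D) {Q : Ideal D}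
    (hQ : Q.IsPrime) {a : D} (ha : a ≠ 0) (haQ : a ∈ Q) :
    ∃ P : Ideal D, IsHeightOnePrime P ∧ a ∈ P ∧ P ≤ Q := by
  by_contra! hnone
  set T := (hD.2.2 a ha).toFinset
  -- an element outside `Q` lying in each of the finitely many height-one primes containing `a`
  obtain ⟨s, hsT, hsQ⟩ : ∃ s ∈ T.inf id, s ∉ Q := SetLike.not_le_iff_exists.1 fun hle => by
    obtain ⟨P, hPT, hPQ⟩ := (hQ.inf_le').1 hle
    rw [Set.Finite.mem_toFinset] at hPT
    exact hnone P hPT.1 hPT.2 hPQ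
  have hpow : ∀ P ∈ T, ∃ m : ℕ, ∃ t ∉ P, a ∣ s ^ m * t := fun P hPT' => by
    have hPT := (Set.Finite.mem_toFinset _).1 hPT'
    have := hPT.1.1
    exact exists_dvd_pow_mul_of_mem (hD.1 P hPT.1) ha (Finset.inf_le (f := id) hPT' hsT)
  choose! m hm using hpow
  have hdvd : a ∣ s ^ T.sup m := hD.dvd_of_forall_dvd_mul ha fun P hP => by
    by_cases haP : a ∈ P
    · have hPT : P ∈ T := (Set.Finite.mem_toFinset _).2 ⟨hP, haP⟩
      obtain ⟨t, ht, hdvd⟩ := hm P hPT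
      exact ⟨t, ht, hdvd.trans (mul_dvd_mul_right (pow_dvd_pow s (Finset.le_sup hPT)) t)⟩
    · exact ⟨a, haP, dvd_mul_left a _⟩
  exact hsQ (hQ.mem_of_pow_mem _ (Ideal.mem_of_dvd _ hdvd haQ))

end Krull

section ProductDecomposition

variable {ι : Type*} {A : Type u} {D : ι → Type u} [CommRing A] [∀ i, CommRing (D i)]
  [DecidableEq ι] (e : A ≃+* ∀ i, D i)

lemma RingEquiv.mul_symm_single_one (x : A) (i : ι) :
    x * e.symm (Pi.single i 1) = e.symm (Pi.single i (e x i)) := by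
  apply e.injective
  rw [map_mul, e.apply_symm_apply, e.apply_symm_apply, ← Pi.single_mul_right, mul_one]

lemma RingEquiv.exists_symm_single_one_notMem [Fintype ι] {Q : Ideal A} (hQ : Q.IsPrime) :
    ∃ i, e.symm (Pi.single i 1) ∉ Q := by
  by_contra! h
  refine hQ.ne_top ((Ideal.eq_top_iff_one Q).2 ?_)
  rw [← map_one e.symm, ← Finset.univ_sum_single (1 : ∀ i, D i), map_sum]
  exact Q.sum_mem fun i _ => h i

lemma RingEquiv.ker_evalRingHom_comp_le {Q : Ideal A} (hQ : Q.IsPrime) {i : ι}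
    (hi : e.symm (Pi.single i 1) ∉ Q) :
    RingHom.ker ((Pi.evalRingHom D i).comp e.toRingHom) ≤ Q := fun x hx => by
  have hx0 : x * e.symm (Pi.single i 1) = 0 := by
    rw [e.mul_symm_single_one, show e x i = 0 from hx, Pi.single_zero, map_zero]
  exact (hQ.mem_or_mem (hx0 ▸ Q.zero_mem)).resolve_right hi

lemma RingEquiv.evalRingHom_comp_surjective (i : ι) :
    Function.Surjective ((Pi.evalRingHom D i).comp e.toRingHom) :=
  fun d => ⟨e.symm (Pi.single i d), by simp⟩

lemma RingEquiv.isHeightOnePrime_comap_evalRingHom_comp {i : ι} {P : Ideal (D i)}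
    (hP : IsHeightOnePrime P) :
    IsHeightOnePrime (P.comap ((Pi.evalRingHom D i).comp e.toRingHom)) :=
  hP.comap_of_surjective (e.evalRingHom_comp_surjective i) fun _ hQ hQP =>
    e.ker_evalRingHom_comp_le hQ fun hi =>
      hP.1.ne_top ((Ideal.eq_top_iff_one P).2 (by simpa using Ideal.mem_comap.1 (hQP hi)))

end ProductDecomposition

theorem stmt11 (R : Type u) (R' : Type u) [CommRing R] [IsDomain R] [CommRing R']
    [Algebra R R'] [Module.FaithfullyFlat R R']
    (hR' : IsFiniteProductOfKrullDomains R')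
    (p : Ideal R) (hp : IsHeightOnePrime p) :
    ∃ P : Ideal R', IsHeightOnePrime P ∧ Ideal.comap (algebraMap R R') P = p := by
  obtain ⟨n, D, _, _, hKrull, ⟨e⟩⟩ := hR'
  have := hp.1
  obtain ⟨Q, hQ, hQp⟩ := Ideal.exists_isPrime_liesOver_of_faithfullyFlat (B := R') p
  obtain ⟨i, hiQ⟩ := e.exists_symm_single_one_notMem hQ
  set π := (Pi.evalRingHom D i).comp e.toRingHom
  have hπ := e.evalRingHom_comp_surjective i
  have hker := e.ker_evalRingHom_comp_le hQ hiQ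
  obtain ⟨a, hap, ha⟩ := Submodule.exists_mem_ne_zero_of_ne_bot hp.ne_bot
  have haQ : algebraMap R R' a ∈ Q := by rwa [hQp.over] at hap
  -- `R'` is torsion-free over `R` by flatness
  have hπa : π (algebraMap R R' a) ≠ 0 := fun h0 => by
    have : a • e.symm (Pi.single i 1) = 0 := by
      rw [Algebra.smul_def, e.mul_symm_single_one, show e _ i = 0 from h0, Pi.single_zero, map_zero]
    exact hiQ ((smul_eq_zero_iff_right ha).1 this ▸ Q.zero_mem)
  obtain ⟨P, hP, haP, hPQ⟩ := (hKrull i).exists_isHeightOnePrime_le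
    (Ideal.map_isPrime_of_surjective hπ hker) hπa (Ideal.mem_map_of_mem π haQ)
  refine ⟨P.comap π, e.isHeightOnePrime_comap_evalRingHom_comp hP, ?_⟩
  refine hp.eq_of_le ((hP.1.comap π).comap _) (fun h0 => ha ?_) ?_
  · have haP' : a ∈ (P.comap π).comap (algebraMap R R') := haP
    rwa [h0, Submodule.mem_bot] at haP'
  · rw [hQp.over, Ideal.under_def, ← sup_eq_left.2 hker, ← Ideal.comap_map_of_surjective' π hπ]
    exact Ideal.comap_mono (Ideal.comap_mono hPQ)
end

section
/- Let k be a field, V and W k-vector spaces, k' a field extension of k, and α ∈ V ⊗_k W. If the image of α in (k' ⊗_k V) ⊗_{k'} (k' ⊗_k W) is a pure tensor μ' ⊗ ν' for some μ' ∈ k' ⊗_k V and ν' ∈ k' ⊗_k W, then α itself is a pure tensor: there exist μ ∈ V and ν ∈ W with α = μ ⊗ ν. -/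
/-!
Write `α = ∑ᵢ bᵢ ⊗ gᵢ` in a basis `b` of `V`. The vectors `1 ⊗ bᵢ` form a basis of `k' ⊗ V`, and
the coordinates of `α` after base change are the `1 ⊗ gᵢ`; those of `μ' ⊗ ν'` are `cᵢ • ν'`. So all
`1 ⊗ gᵢ` lie on the `k'`-line through `ν'`, and a `k`-linear retraction `k' → k` of a nonzero
coordinate descends this to: all `gᵢ` are `k`-multiples of one vector `w`, whence `α = (∑ᵢ aᵢ bᵢ) ⊗ w`.
-/
open TensorProduct

universe u

theorem TensorProduct.exists_smul_eq_of_tmul_eq_tmul {k K W : Type*} [Field k]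
    [AddCommGroup K] [Module k K] [AddCommGroup W] [Module k W] {u u' : K} (hu : u ≠ 0)
    {x y : W} (h : u ⊗ₜ[k] x = u' ⊗ₜ[k] y) : ∃ a : k, x = a • y := by
  obtain ⟨ψ, hψ⟩ := (LinearMap.toSpanSingleton k K u).exists_leftInverse_of_injective
    (LinearMap.ker_toSpanSingleton k hu)
  have hψu : ψ u = 1 := by simpa using LinearMap.congr_fun hψ 1
  refine ⟨ψ u', ?_⟩
  simpa [hψu] using congrArg (TensorProduct.lid k W ∘ LinearMap.rTensor W ψ) h

theorem TensorProduct.equivFinsuppOfBasisLeft_baseChange {R A M N ι : Type*} [CommRing R]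
    [CommRing A] [Algebra R A] [AddCommGroup M] [Module R M] [AddCommGroup N] [Module R N]
    [DecidableEq ι] (b : Module.Basis ι R M) (x : M ⊗[R] N) :
    equivFinsuppOfBasisLeft (b.baseChange A)
        (AlgebraTensorModule.distribBaseChange R A M N ((1 : A) ⊗ₜ x)) =
      (equivFinsuppOfBasisLeft b x).mapRange ((1 : A) ⊗ₜ ·) (tmul_zero _ _) := by
  induction x with
  | zero => simp
  | tmul m n =>
    ext i
    simp [Module.Basis.baseChange_repr_tmul, smul_tmul']
  | add x y hx hy => simp [tmul_add, hx, hy, Finsupp.mapRange_add]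

theorem TensorProduct.exists_smul_eq_of_one_tmul_eq_smul {k K W ι : Type*} [Field k] [CommRing K]
    [Nontrivial K] [Algebra k K] [AddCommGroup W] [Module k W] (g : ι → W) (c : ι → K)
    (ν : K ⊗[k] W) (h : ∀ i, (1 : K) ⊗ₜ[k] g i = c i • ν) :
    ∃ (w : W) (a : ι → k), ∀ i, g i = a i • w := by
  suffices ∃ w : W, ∀ i, ∃ a : k, g i = a • w by
    obtain ⟨w, hw⟩ := this
    choose a ha using hw
    exact ⟨w, a, ha⟩
  by_cases hc : ∃ j, c j ≠ 0
  · obtain ⟨j, hj⟩ := hc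
    refine ⟨g j, fun i => exists_smul_eq_of_tmul_eq_tmul (u' := c i) hj ?_⟩
    calc c j ⊗ₜ[k] g i = c j • (1 : K) ⊗ₜ[k] g i := by rw [smul_tmul', smul_eq_mul, mul_one]
      _ = c i • (1 : K) ⊗ₜ[k] g j := by rw [h, h, smul_comm]
      _ = c i ⊗ₜ[k] g j := by rw [smul_tmul', smul_eq_mul, mul_one]
  · push Not at hc
    refine ⟨0, fun i => exists_smul_eq_of_tmul_eq_tmul (u' := 1) (one_ne_zero' K) ?_⟩
    rw [h i, hc i, zero_smul, tmul_zero]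

theorem stmt15 (k : Type u) (k' : Type u) (V W : Type u) [Field k] [Field k'] [Algebra k k']
    [AddCommGroup V] [Module k V] [AddCommGroup W] [Module k W]
    (α : V ⊗[k] W)
    (h : ∃ (μ' : k' ⊗[k] V) (ν' : k' ⊗[k] W),
      TensorProduct.AlgebraTensorModule.distribBaseChange k k' V W
        ((1 : k') ⊗ₜ[k] α) = μ' ⊗ₜ[k'] ν') :
    ∃ (μ : V) (ν : W), α = μ ⊗ₜ[k] ν := by
  classical
  obtain ⟨μ', ν', h⟩ := h
  let b := Module.Basis.ofVectorSpace k V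
  let g := equivFinsuppOfBasisLeft b α
  have hg : ∀ i, (1 : k') ⊗ₜ[k] g i = (b.baseChange k').repr μ' i • ν' := fun i => by
    simpa [equivFinsuppOfBasisLeft_baseChange, equivFinsuppOfBasisLeft_apply_tmul_apply] using
      congrArg (equivFinsuppOfBasisLeft (b.baseChange k') · i) h
  obtain ⟨w, a, hga⟩ := exists_smul_eq_of_one_tmul_eq_smul g _ ν' hg
  refine ⟨g.sum fun i _ => a i • b i, w, ?_⟩
  have hα : α = g.sum fun i n => b i ⊗ₜ n := by
    rw [← equivFinsuppOfBasisLeft_symm_apply, LinearEquiv.symm_apply_apply]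
  rw [hα]
  simp only [Finsupp.sum, sum_tmul, hga, smul_tmul]
end

section
/- Let A be a Krull domain and U = Spec A \ V(I) an open subset of Spec A. Then there is a quasi-compact open subset V ⊆ U such that every point of U \ V has local ring of dimension at least 2 (codim_U(U \ V) ≥ 2). -/
universe u

lemma two_le_dim_of_chain {R : Type u} [CommRing R] (P Q₁ Q₂ : Ideal R) [hP : P.IsPrime]
    (h1 : Q₁.IsPrime) (h2 : Q₂.IsPrime) (h12 : Q₁ < Q₂) (h2P : Q₂ < P) :
    (2 : WithBot (WithTop ℕ)) ≤ ringKrullDim (Localization.AtPrime P) := by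
  let e := (IsLocalization.AtPrime.orderIsoOfPrime (Localization.AtPrime P) P).symm
  let p0 := e ⟨Q₁, h1, le_of_lt (h12.trans h2P)⟩
  let p1 := e ⟨Q₂, h2, h2P.le⟩
  let p2 := e ⟨P, hP, le_refl P⟩
  have hlt1 : p0 < p1 := e.strictMono (by exact h12)
  have hlt2 : p1 < p2 := e.strictMono (by exact h2P)
  have hp0 := p0.2
  have hp1 := p1.2
  have hp2 := p2.2
  let s : LTSeries (PrimeSpectrum (Localization.AtPrime P)) :=
    { length := 2
      toFun := ![⟨p0.1, hp0⟩, ⟨p1.1, hp1⟩, ⟨p2.1, hp2⟩]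
      step := by
        intro i
        fin_cases i
        · exact hlt1
        · exact hlt2 }
  have := Order.LTSeries.length_le_krullDim s
  rw [ringKrullDim]
  exact_mod_cast this

theorem stmt19 (A : Type u) [CommRing A] [IsDomain A] (hA : IsKrullDomain A)
    (I : Ideal A) :
    ∃ J : Ideal A, J.FG ∧ J ≤ I ∧
      ∀ P : PrimeSpectrum A, ¬ I ≤ P.asIdeal → J ≤ P.asIdeal →
        (2 : WithBot (WithTop ℕ)) ≤ ringKrullDim (Localization.AtPrime P.asIdeal) := by
  classical
  by_cases hI : I = ⊥
  · exact ⟨⊥, ⟨∅, by simp⟩, bot_le, fun P hP _ => absurd (hI ▸ bot_le) hP⟩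
  obtain ⟨a, haI, ha0⟩ := Submodule.ne_bot_iff I |>.mp hI
  have hfin : {P : Ideal A | (IsHeightOnePrime P ∧ a ∈ P) ∧ ¬ I ≤ P}.Finite :=
    (hA.2.2 a ha0).subset (fun P hP => hP.1)
  set t : Finset (Ideal A) := hfin.toFinset with ht
  have hp : ∀ i ∈ t, i ≠ (⊥ : Ideal A) → i ≠ (⊥ : Ideal A) → i.IsPrime := by
    intro i hi _ _
    exact (hfin.mem_toFinset.mp hi).1.1.1
  have hnotsub : ¬ ((I : Set A) ⊆ ⋃ i ∈ (↑t : Set (Ideal A)), (i : Set A)) := by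
    intro h
    obtain ⟨i, hi, hle⟩ := (Ideal.subset_union_prime (⊥ : Ideal A) (⊥ : Ideal A) hp).mp h
    exact (hfin.mem_toFinset.mp hi).2 hle
  obtain ⟨b, hbI, hb⟩ := Set.not_subset.mp hnotsub
  refine ⟨Ideal.span {a, b}, ⟨{a, b}, by simp⟩, ?_, ?_⟩
  · rw [Ideal.span_le]
    intro x hx
    rcases hx with h | h
    · exact h ▸ haI
    · exact (Set.mem_singleton_iff.mp h) ▸ hbI
  intro P hIP hJP
  have haP : a ∈ P.asIdeal := hJP (Ideal.subset_span (Set.mem_insert _ _))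
  have hbP : b ∈ P.asIdeal := hJP (Ideal.subset_span (Set.mem_insert_of_mem _ rfl))
  by_contra hdim
  have h1 : IsHeightOnePrime P.asIdeal := by
    refine ⟨P.isPrime, ⟨⊥, Ideal.bot_prime, bot_lt_iff_ne_bot.mpr ?_⟩, ?_⟩
    · intro h
      rw [h] at haP; exact ha0 (Ideal.mem_bot.mp haP)
    · intro Q₁ Q₂ hQ₁ hQ₂ h12 h2P
      exact hdim (two_le_dim_of_chain P.asIdeal Q₁ Q₂ hQ₁ hQ₂ h12 h2P)
  have hmem : P.asIdeal ∈ t := hfin.mem_toFinset.mpr ⟨⟨h1, haP⟩, hIP⟩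
  exact hb (Set.mem_biUnion hmem hbP)
end
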